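/- arXiv:2509.12848 — 2 statements merged into one kernel-verified Lean document; each statement's English description precedes it below -/
import Mathlib

section
/- Key lemma, subsolution part: assume the steady assumptions and let u ∈ USC(Γ) be a viscosity subsolution and v ∈ LSC(Γ) a viscosity supersolution of problem (P) such that max_Γ (u − v) = (u − v)(O). Then for every 1 ≤ i ≤ N, the quantities p̲_i = liminf_{t→0⁺}(u_i(t)−u_i(0))/t and p̄_i = limsup_{t→0⁺}(u_i(t)−u_i(0))/t are finite, and the one-dimensional superdifferential satisfies D⁺u_i(0) = [p̄_i, +∞). -/
/-!
Both difference quotients are trapped between two linear bounds,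
`u_i(0) - K t ≤ u_i(t) ≤ u_i(0) + L t` for small `t > 0`; once `p̄_i` is finite,
`D⁺u_i(0) = [p̄_i, ∞)` is a one-variable fact.

Each bound comes from touching `u` from above by a quadratic `p t + q t²` and contradicting the
subsolution inequality. For the upper bound the contact point is inside edge `i`: on a degenerate
edge the coercivity of `H_i` makes a steep line a strict supersolution, on an elliptic one a
strongly concave parabola does. For the lower bound, if `u_i` dipped below `u_i(0) - K t`, the test
function with slope `-K/2` on edge `i` and slopes above the upper bounds on the other edges would
touch `u` from above at `O`, where the junction condition fails: every `G_j` is positive there, and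
so is `F`, whose `i`-th slope is very negative.
-/

open Set Filter Topology

namespace Paper

/-- Data of the junction problem (P): a junction with `N` edges of lengths `ℓ i`,
glued at the junction point `O` (parameter `0` of each edge), with a (possibly
degenerate) diffusion `a i`, Hamiltonians `H i`, a Kirchhoff nonlinearity `F`,
Dirichlet data `h i` and a constant `lam > 0`.  Functions on the junction `Γ`
are represented edge-wise: `u : Fin N → ℝ → ℝ`, where only the values of
`u i` on `[0, ℓ i]` are relevant and `u i 0` represents the value at `O`. -/
structure Data (N : ℕ) where
  ℓ : Fin N → ℝ
  ℓ_pos : ∀ i, 0 < ℓ i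
  lam : ℝ
  lam_pos : 0 < lam
  a : Fin N → ℝ → ℝ
  a_nonneg : ∀ i, ∀ t ∈ Set.Icc (0:ℝ) (ℓ i), 0 ≤ a i t
  a_cont : ∀ i, ContinuousOn (a i) (Set.Icc 0 (ℓ i))
  H : Fin N → ℝ → ℝ → ℝ
  H_cont : ∀ i, ContinuousOn (fun q : ℝ × ℝ => H i q.1 q.2)
      ((Set.Icc 0 (ℓ i)) ×ˢ (Set.univ : Set ℝ))
  F : ℝ → (Fin N → ℝ) → ℝ
  F_cont : Continuous (fun q : ℝ × (Fin N → ℝ) => F q.1 q.2)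
  h : Fin N → ℝ

variable {N : ℕ}

/-- A family of edge functions defines a function on `Γ`: values at `O` agree. -/
def Glued (u : Fin N → ℝ → ℝ) : Prop := ∀ i j : Fin N, u i 0 = u j 0

/-- `u ∈ USC(Γ)`. -/
def IsUSC (D : Data N) (u : Fin N → ℝ → ℝ) : Prop :=
  ∀ i, UpperSemicontinuousOn (u i) (Set.Icc 0 (D.ℓ i))

/-- `u ∈ LSC(Γ)`. -/
def IsLSC (D : Data N) (u : Fin N → ℝ → ℝ) : Prop :=
  ∀ i, LowerSemicontinuousOn (u i) (Set.Icc 0 (D.ℓ i))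

/-- Test functions in `C²(Γ)` (edge-wise C², glued at `O`). -/
def IsTest (φ : Fin N → ℝ → ℝ) : Prop :=
  Glued φ ∧ ∀ i, ContDiff ℝ 2 (φ i)

/-- `G_i(r,p,X,x) = λ r − a_i(x) X + H_i(x,p)`. -/
def G (D : Data N) (i : Fin N) (r p X t : ℝ) : ℝ :=
  D.lam * r - D.a i t * X + D.H i t p

/-- Local maximum point of an edge-wise function at an interior edge point. -/
def LocalMaxEdge (D : Data N) (w : Fin N → ℝ → ℝ) (i : Fin N) (t : ℝ) : Prop :=
  ∃ δ > 0, ∀ s ∈ Set.Icc (0:ℝ) (D.ℓ i), |s - t| < δ → w i s ≤ w i t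

def LocalMinEdge (D : Data N) (w : Fin N → ℝ → ℝ) (i : Fin N) (t : ℝ) : Prop :=
  ∃ δ > 0, ∀ s ∈ Set.Icc (0:ℝ) (D.ℓ i), |s - t| < δ → w i t ≤ w i s

/-- Local maximum point at the junction point `O`. -/
def LocalMaxO (D : Data N) (w : Fin N → ℝ → ℝ) : Prop :=
  ∃ δ > 0, ∀ j, ∀ s ∈ Set.Icc (0:ℝ) (D.ℓ j), s < δ → w j s ≤ w j 0

def LocalMinO (D : Data N) (w : Fin N → ℝ → ℝ) : Prop :=
  ∃ δ > 0, ∀ j, ∀ s ∈ Set.Icc (0:ℝ) (D.ℓ j), s < δ → w j 0 ≤ w j s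

/-- Local maximum point at the boundary vertex `v_i` (parameter `ℓ i`). -/
def LocalMaxVert (D : Data N) (w : Fin N → ℝ → ℝ) (i : Fin N) : Prop :=
  ∃ δ > 0, ∀ s ∈ Set.Icc (0:ℝ) (D.ℓ i), D.ℓ i - s < δ → w i s ≤ w i (D.ℓ i)

def LocalMinVert (D : Data N) (w : Fin N → ℝ → ℝ) (i : Fin N) : Prop :=
  ∃ δ > 0, ∀ s ∈ Set.Icc (0:ℝ) (D.ℓ i), D.ℓ i - s < δ → w i (D.ℓ i) ≤ w i s

/-- Viscosity subsolution of problem (P), junction viscosity sense. -/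
def IsSubsol (D : Data N) (u : Fin N → ℝ → ℝ) : Prop :=
  IsUSC D u ∧ Glued u ∧
  ∀ φ : Fin N → ℝ → ℝ, IsTest φ →
    ((∀ i, ∀ t ∈ Set.Ioo (0:ℝ) (D.ℓ i),
        LocalMaxEdge D (fun j s => u j s - φ j s) i t →
        G D i (u i t) (deriv (φ i) t) (deriv (deriv (φ i)) t) t ≤ 0) ∧
     (LocalMaxO D (fun j s => u j s - φ j s) →
        (∃ i, G D i (u i 0) (deriv (φ i) 0) (deriv (deriv (φ i)) 0) 0 ≤ 0) ∨
        (∀ i, D.F (u i 0) (fun j => deriv (φ j) 0) ≤ 0)) ∧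
     (∀ i, LocalMaxVert D (fun j s => u j s - φ j s) i →
        G D i (u i (D.ℓ i)) (deriv (φ i) (D.ℓ i)) (deriv (deriv (φ i)) (D.ℓ i)) (D.ℓ i) ≤ 0 ∨
        u i (D.ℓ i) ≤ D.h i))

/-- Viscosity supersolution of problem (P), junction viscosity sense. -/
def IsSupersol (D : Data N) (v : Fin N → ℝ → ℝ) : Prop :=
  IsLSC D v ∧ Glued v ∧
  ∀ φ : Fin N → ℝ → ℝ, IsTest φ →
    ((∀ i, ∀ t ∈ Set.Ioo (0:ℝ) (D.ℓ i),
        LocalMinEdge D (fun j s => v j s - φ j s) i t →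
        0 ≤ G D i (v i t) (deriv (φ i) t) (deriv (deriv (φ i)) t) t) ∧
     (LocalMinO D (fun j s => v j s - φ j s) →
        (∃ i, 0 ≤ G D i (v i 0) (deriv (φ i) 0) (deriv (deriv (φ i)) 0) 0) ∨
        (∀ i, 0 ≤ D.F (v i 0) (fun j => deriv (φ j) 0))) ∧
     (∀ i, LocalMinVert D (fun j s => v j s - φ j s) i →
        0 ≤ G D i (v i (D.ℓ i)) (deriv (φ i) (D.ℓ i)) (deriv (deriv (φ i)) (D.ℓ i)) (D.ℓ i) ∨
        D.h i ≤ v i (D.ℓ i)))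

/-- Assumption (Ham) for the Hamiltonian `H i`, with constant `C`. -/
def Ham (D : Data N) (C : ℝ) (i : Fin N) : Prop :=
  (∀ t ∈ Set.Icc (0:ℝ) (D.ℓ i), ∀ s ∈ Set.Icc (0:ℝ) (D.ℓ i), ∀ p : ℝ,
      |D.H i t p - D.H i s p| ≤ C * (1 + |p|) * |t - s|) ∧
  (∀ t ∈ Set.Icc (0:ℝ) (D.ℓ i), ∀ p q : ℝ, |D.H i t p - D.H i t q| ≤ C * |p - q|)

/-- Assumption (Hcoercive) for `H i` on the set `S`, with constant `C`. -/
def Coercive (D : Data N) (C : ℝ) (i : Fin N) (S : Set ℝ) : Prop :=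
  ∀ t ∈ S, ∀ p : ℝ, C⁻¹ * |p| - C ≤ D.H i t p

/-- Assumption (hyp-diff) for the diffusion `a i`. -/
def HypDiff (D : Data N) (i : Fin N) : Prop :=
  ∃ σ : ℝ → ℝ, (∃ C : NNReal, LipschitzOnWith C σ (Set.Icc 0 (D.ℓ i))) ∧
    ∀ t ∈ Set.Icc (0:ℝ) (D.ℓ i), D.a i t = (σ t) ^ 2

/-- Assumption (hyp-kirch) for the Kirchhoff nonlinearity `F`. -/
def Kirchhoff (D : Data N) : Prop :=
  (∀ (r s : ℝ) (p q : Fin N → ℝ), s ≤ r → (∀ i, p i ≤ q i) → D.F s q ≤ D.F r p) ∧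
  (∀ (r s : ℝ) (p q : Fin N → ℝ), s ≤ r → (∀ i, p i ≤ q i) → (∃ j, p j < q j) →
      D.F s q < D.F r p) ∧
  (∀ (i : Fin N) (r : ℝ) (p : Fin N → ℝ),
      Filter.Tendsto (fun z : ℝ => D.F r (Function.update p i z))
        Filter.atBot Filter.atTop)

/-- The steady assumptions (2.9). -/
def Steady (D : Data N) (C : ℝ) : Prop :=
  0 < C ∧ (∀ i, Ham D C i) ∧ (∀ i, HypDiff D i) ∧
  (∀ i, D.a i 0 = 0 → Coercive D C i (Set.Icc 0 (D.ℓ i))) ∧ Kirchhoff D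

/-- Assumption (hyp-dir). -/
def HypDir (D : Data N) (C : ℝ) : Prop :=
  ∀ i, 0 < D.a i (D.ℓ i) ∨
    ∃ δ > 0, Coercive D C i (Set.Icc (D.ℓ i - δ) (D.ℓ i))


/-- One-dimensional (first-order) superdifferential at `0⁺` of `w : [0,∞) → ℝ`:
`p ∈ D⁺w(0)` iff `w(t) ≤ w(0) + p t + o(t)` as `t → 0⁺`. -/
def D1plus (w : ℝ → ℝ) : Set ℝ :=
  {p | ∀ ε > 0, ∀ᶠ t in 𝓝[>] (0:ℝ), w t ≤ w 0 + p * t + ε * t}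

/-- One-dimensional (first-order) subdifferential at `0⁺`:
`q ∈ D⁻w(0)` iff `w(t) ≥ w(0) + q t + o(t)` as `t → 0⁺`. -/
def D1minus (w : ℝ → ℝ) : Set ℝ :=
  {q | ∀ ε > 0, ∀ᶠ t in 𝓝[>] (0:ℝ), w 0 + q * t - ε * t ≤ w t}

/-- `limsup_{t→0⁺} (w(t) − w(0))/t`, as an extended real. -/
noncomputable def diffQuotLimsup (w : ℝ → ℝ) : EReal :=
  Filter.limsup (fun t : ℝ => (((w t - w 0) / t : ℝ) : EReal)) (𝓝[>] (0:ℝ))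

/-- `liminf_{t→0⁺} (w(t) − w(0))/t`, as an extended real. -/
noncomputable def diffQuotLiminf (w : ℝ → ℝ) : EReal :=
  Filter.liminf (fun t : ℝ => (((w t - w 0) / t : ℝ) : EReal)) (𝓝[>] (0:ℝ))

theorem diffQuotLimsup_le_of_eventually_le {w : ℝ → ℝ} {L : ℝ}
    (h : ∀ᶠ t in 𝓝[>] (0:ℝ), w t ≤ w 0 + L * t) : diffQuotLimsup w ≤ L :=
  limsup_le_of_le (by isBoundedDefault) <| by
    filter_upwards [h, self_mem_nhdsWithin] with t ht (htpos : 0 < t)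
    exact_mod_cast (div_le_iff₀ htpos).2 (by linarith)

theorem le_diffQuotLiminf_of_eventually_le {w : ℝ → ℝ} {K : ℝ}
    (h : ∀ᶠ t in 𝓝[>] (0:ℝ), w 0 - K * t ≤ w t) : ((-K : ℝ) : EReal) ≤ diffQuotLiminf w :=
  le_liminf_of_le (by isBoundedDefault) <| by
    filter_upwards [h, self_mem_nhdsWithin] with t ht (htpos : 0 < t)
    exact_mod_cast (le_div_iff₀ htpos).2 (by linarith)

theorem D1plus_eq_Ici_of_diffQuotLimsup_eq {w : ℝ → ℝ} {p : ℝ} (h : diffQuotLimsup w = p) :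
    D1plus w = Ici p := by
  ext q
  refine ⟨fun hq => ?_, fun (hpq : p ≤ q) ε hε => ?_⟩
  · show p ≤ q
    refine le_of_forall_pos_le_add fun ε hε => ?_
    have hle : diffQuotLimsup w ≤ ((q + ε : ℝ) : EReal) :=
      diffQuotLimsup_le_of_eventually_le <| (hq ε hε).mono fun t ht => by linarith
    exact_mod_cast h ▸ hle
  · have hlt : diffQuotLimsup w < ((q + ε : ℝ) : EReal) := by
      rw [h]; exact_mod_cast (by linarith : p < q + ε)
    filter_upwards [eventually_lt_of_limsup_lt hlt, self_mem_nhdsWithin]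
      with t ht (htpos : 0 < t)
    have := (div_lt_iff₀ htpos).1 (by exact_mod_cast ht : (w t - w 0) / t < q + ε)
    linarith

theorem exists_diffQuot_eq_coe_of_eventually {w : ℝ → ℝ} {L K : ℝ}
    (hup : ∀ᶠ t in 𝓝[>] (0:ℝ), w t ≤ w 0 + L * t)
    (hlow : ∀ᶠ t in 𝓝[>] (0:ℝ), w 0 - K * t ≤ w t) :
    ∃ plow pbar : ℝ, diffQuotLiminf w = plow ∧ diffQuotLimsup w = pbar ∧
      D1plus w = Ici pbar := by
  have hle : diffQuotLiminf w ≤ diffQuotLimsup w := liminf_le_limsup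
  have hsup := diffQuotLimsup_le_of_eventually_le hup
  have hinf := le_diffQuotLiminf_of_eventually_le hlow
  have hsup_ne_top : diffQuotLimsup w ≠ ⊤ := ne_top_of_le_ne_top (EReal.coe_ne_top _) hsup
  have hsup_ne_bot : diffQuotLimsup w ≠ ⊥ :=
    ne_bot_of_le_ne_bot (EReal.coe_ne_bot _) (hinf.trans hle)
  have hinf_ne_top : diffQuotLiminf w ≠ ⊤ :=
    ne_top_of_le_ne_top (EReal.coe_ne_top _) (hle.trans hsup)
  have hinf_ne_bot : diffQuotLiminf w ≠ ⊥ := ne_bot_of_le_ne_bot (EReal.coe_ne_bot _) hinf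
  have hpbar := (EReal.coe_toReal hsup_ne_top hsup_ne_bot).symm
  exact ⟨_, _, (EReal.coe_toReal hinf_ne_top hinf_ne_bot).symm, hpbar,
    D1plus_eq_Ici_of_diffQuotLimsup_eq hpbar⟩

theorem eventually_mul_lt_nhdsGT {c ε : ℝ} (hε : 0 < ε) : ∀ᶠ t in 𝓝[>] (0:ℝ), c * t < ε :=
  nhdsWithin_le_nhds <| (continuous_const_mul c).tendsto' 0 0 (mul_zero c) |>.eventually
    (eventually_lt_nhds hε)

def quad (p q s : ℝ) : ℝ := p * s + q * s ^ 2

@[simp]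
theorem quad_zero (p q : ℝ) : quad p q 0 = 0 := by simp [quad]

theorem hasDerivAt_quad (p q s : ℝ) : HasDerivAt (quad p q) (p + 2 * q * s) s := by
  refine (((hasDerivAt_id' s).const_mul p).add ((hasDerivAt_pow 2 s).const_mul q)).congr_deriv ?_
  push_cast
  ring

@[simp]
theorem deriv_quad (p q s : ℝ) : deriv (quad p q) s = p + 2 * q * s :=
  (hasDerivAt_quad p q s).deriv

@[simp]
theorem deriv_deriv_quad (p q s : ℝ) : deriv (deriv (quad p q)) s = 2 * q := by
  have : deriv (quad p q) = fun s => p + 2 * q * s := funext (deriv_quad p q)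
  rw [this]
  simp

theorem contDiff_quad (p q : ℝ) : ContDiff ℝ 2 (quad p q) :=
  (contDiff_const.mul contDiff_id).add (contDiff_const.mul (contDiff_id.pow 2))

theorem eventually_mul_le_quad {L M : ℝ} (hLM : L < M) (θ : ℝ) :
    ∀ᶠ s in 𝓝[>] (0:ℝ), L * s ≤ quad M (-θ) s := by
  filter_upwards [eventually_mul_lt_nhdsGT (c := θ) (sub_pos.2 hLM), self_mem_nhdsWithin]
    with s hs (hspos : 0 < s)
  have := mul_le_mul_of_nonneg_left hs.le hspos.le
  simp only [quad]
  nlinarith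

theorem G_mono (D : Data N) (i : Fin N) {r r' : ℝ} (h : r ≤ r') (p X t : ℝ) :
    G D i r p X t ≤ G D i r' p X t := by
  simp only [G]
  nlinarith [D.lam_pos]

section

variable {D : Data N} {C : ℝ} {i : Fin N}

theorem Ham.exists_lower_bound (hH : Ham D C i) :
    ∃ B > 0, ∀ t ∈ Icc (0:ℝ) (D.ℓ i), ∀ q, -(B * (1 + |q|)) ≤ D.H i t q := by
  have hℓ := D.ℓ_pos i
  have h0 : (0:ℝ) ∈ Icc 0 (D.ℓ i) := ⟨le_rfl, hℓ.le⟩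
  refine ⟨|D.H i 0 0| + |C| * D.ℓ i + |C| + 1, by positivity, fun t ht q => ?_⟩
  have hx := (abs_le.1 (hH.1 t ht 0 h0 q)).1
  have hp := (abs_le.1 (hH.2 0 h0 q 0)).1
  rw [sub_zero, abs_of_nonneg ht.1] at hx
  rw [sub_zero] at hp
  have hCt : C * (1 + |q|) * t ≤ |C| * (1 + |q|) * D.ℓ i :=
    mul_le_mul (mul_le_mul_of_nonneg_right (le_abs_self C) (by positivity)) ht.2 ht.1
      (by positivity)
  nlinarith [neg_abs_le (D.H i 0 0), le_abs_self C, abs_nonneg q, abs_nonneg C,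
    mul_nonneg (abs_nonneg C) (abs_nonneg q), mul_nonneg (abs_nonneg (D.H i 0 0)) (abs_nonneg q),
    mul_nonneg (mul_nonneg (abs_nonneg C) hℓ.le) (abs_nonneg q)]

theorem exists_lt_a_of_pos (ha : 0 < D.a i 0) :
    ∃ α > 0, ∃ η > 0, ∀ t ∈ Icc (0:ℝ) (D.ℓ i), t < η → α < D.a i t := by
  have h0 : (0:ℝ) ∈ Icc 0 (D.ℓ i) := ⟨le_rfl, (D.ℓ_pos i).le⟩
  have hev : ∀ᶠ t in 𝓝[Icc 0 (D.ℓ i)] (0:ℝ), D.a i 0 / 2 < D.a i t :=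
    (D.a_cont i 0 h0).eventually (eventually_gt_nhds (half_lt_self ha))
  obtain ⟨η, hη, hball⟩ := Metric.mem_nhdsWithin_iff.1 hev
  refine ⟨_, half_pos ha, η, hη, fun t ht htη => hball ⟨?_, ht⟩⟩
  rw [Metric.mem_ball, Real.dist_eq, sub_zero, abs_of_nonneg ht.1]
  exact htη

theorem localMaxO_of_eventually {w : Fin N → ℝ → ℝ}
    (h : ∀ j, ∀ᶠ s in 𝓝[>] (0:ℝ), w j s ≤ w j 0) : LocalMaxO D w := by
  obtain ⟨δ, hδ, hsub⟩ := mem_nhdsGT_iff_exists_Ioo_subset.1 (eventually_all.2 h)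
  refine ⟨δ, hδ, fun j s hs hsδ => ?_⟩
  rcases hs.1.eq_or_lt with rfl | hspos
  · exact le_rfl
  · exact hsub ⟨hspos, hsδ⟩ j

variable {u : Fin N → ℝ → ℝ}

theorem IsSubsol.sub_le_of_forall_G_pos (hu : IsSubsol D u) {φ : ℝ → ℝ}
    (hφ : ContDiff ℝ 2 φ) (hφ0 : φ 0 = 0) {r : ℝ} (hr : r ≤ D.ℓ i) (hend : u i r - φ r < u i 0)
    (hG : ∀ t ∈ Ioo 0 r, u i 0 ≤ u i t - φ t →
      0 < G D i (u i t) (deriv φ t) (deriv (deriv φ) t) t) :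
    ∀ t ∈ Icc 0 r, u i t - φ t ≤ u i 0 := by
  by_contra! ⟨t, ht, hgt⟩
  have husc : UpperSemicontinuousOn (fun s => u i s - φ s) (Icc 0 r) := by
    simpa only [sub_eq_add_neg, Pi.neg_apply] using ((hu.1 i).mono (Icc_subset_Icc_right hr)).add
      hφ.continuous.neg.continuousOn.upperSemicontinuousOn
  obtain ⟨ts, hts, hmax⟩ := husc.exists_isMaxOn ⟨t, ht⟩ isCompact_Icc
  have hlt : u i 0 < u i ts - φ ts := hgt.trans_le (hmax ht)
  have hts0 : 0 < ts := hts.1.lt_of_ne <| by rintro rfl; rw [hφ0, sub_zero] at hlt; exact hlt.false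
  have htsr : ts < r := hts.2.lt_of_ne <| by rintro rfl; linarith
  have hloc : LocalMaxEdge D (fun j s => u j s - φ s) i ts := by
    refine ⟨r - ts, sub_pos.2 htsr, fun s hs hsd => hmax ⟨hs.1, ?_⟩⟩
    linarith [(abs_lt.1 hsd).2]
  have hsub := (hu.2.2 (fun _ => φ) ⟨fun _ _ => rfl, fun _ => hφ⟩).1 i ts
    ⟨hts0, htsr.trans_le hr⟩ hloc
  exact (hG ts ⟨hts0, htsr⟩ hlt.le).not_ge hsub

theorem IsSubsol.junction_ineq_quad (hu : IsSubsol D u) (P Θ : Fin N → ℝ)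
    (hmax : ∀ j, ∀ᶠ s in 𝓝[>] (0:ℝ), u j s - quad (P j) (-Θ j) s ≤ u j 0) :
    (∃ j, G D j (u j 0) (P j) (2 * -Θ j) 0 ≤ 0) ∨ ∀ j, D.F (u j 0) P ≤ 0 := by
  have hloc : LocalMaxO D (fun j s => u j s - quad (P j) (-Θ j) s) :=
    localMaxO_of_eventually fun j => by simpa using hmax j
  simpa using (hu.2.2 _ ⟨fun _ _ => by simp, fun j => contDiff_quad _ _⟩).2.1 hloc

theorem IsSubsol.exists_eventually_le_of_coercive (hu : IsSubsol D u) (hC : 0 < C)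
    (hco : Coercive D C i (Icc 0 (D.ℓ i))) :
    ∃ L, ∀ᶠ t in 𝓝[>] (0:ℝ), u i t ≤ u i 0 + L * t := by
  have hℓ := D.ℓ_pos i
  obtain ⟨x, -, hmax⟩ := (hu.1 i).exists_isMaxOn ⟨0, left_mem_Icc.2 hℓ.le⟩ isCompact_Icc
  have hosc : 0 ≤ (u i x - u i 0) / D.ℓ i :=
    div_nonneg (sub_nonneg.2 (hmax (left_mem_Icc.2 hℓ.le))) hℓ.le
  set c := C + D.lam * |u i 0| + 1
  have hc : 0 < c := by linarith [mul_nonneg D.lam_pos.le (abs_nonneg (u i 0))]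
  set K := C * c + (u i x - u i 0) / D.ℓ i
  have hK0 : 0 ≤ K := add_nonneg (mul_pos hC hc).le hosc
  have hCK : c ≤ C⁻¹ * K := by
    rw [mul_add, ← mul_assoc, inv_mul_cancel₀ hC.ne', one_mul, le_add_iff_nonneg_right]
    exact mul_nonneg (inv_nonneg.2 hC.le) hosc
  have hKℓ : K * D.ℓ i = C * c * D.ℓ i + (u i x - u i 0) := by
    simp only [K, add_mul, div_mul_cancel₀ _ hℓ.ne']
  have hend : u i (D.ℓ i) - quad K 0 (D.ℓ i) < u i 0 := by
    have : u i (D.ℓ i) ≤ u i x := hmax (right_mem_Icc.2 hℓ.le)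
    simp only [quad, zero_mul, add_zero]
    nlinarith [mul_pos (mul_pos hC hc) hℓ]
  have hbound := hu.sub_le_of_forall_G_pos (contDiff_quad K 0) (quad_zero K 0) le_rfl hend
    fun t ht hle => by
      have hut : u i 0 ≤ u i t := by
        simp only [quad, zero_mul, add_zero] at hle
        nlinarith [mul_nonneg hK0 ht.1.le]
      have hH := hco t (Ioo_subset_Icc_self ht) K
      rw [abs_of_nonneg hK0] at hH
      simp only [G, deriv_quad, deriv_deriv_quad, mul_zero, zero_mul, add_zero, sub_zero]
      nlinarith [mul_le_mul_of_nonneg_left hut D.lam_pos.le,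
        mul_le_mul_of_nonneg_left (neg_abs_le (u i 0)) D.lam_pos.le]
  refine ⟨K, ?_⟩
  filter_upwards [Ioo_mem_nhdsGT hℓ] with t ht
  have := hbound t (Ioo_subset_Icc_self ht)
  simp only [quad, zero_mul, add_zero] at this
  linarith

/-- Constants for the test function `K t - θ t²` on `[0, r]`: it is nonnegative, it exceeds the
oscillation `m` at `r`, and its concavity `2θα` beats the lower bound `-B (1 + |φ'|)` of the
Hamiltonian plus the zeroth-order term `Λ`. -/
theorem exists_elliptic_constants {α B Λ m r₀ : ℝ} (hα : 0 < α) (hB : 0 < B) (hΛ : 0 ≤ Λ)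
    (hr₀ : 0 < r₀) :
    ∃ r K θ : ℝ, 0 < r ∧ r ≤ r₀ ∧ 0 ≤ θ ∧ θ * r ≤ K ∧ m < K * r - θ * r ^ 2 ∧
      B * (1 + K + 2 * θ * r) + Λ < 2 * θ * α := by
  set r := min r₀ (α / (4 * B))
  have hr : 0 < r := lt_min hr₀ (by positivity)
  have hrB : 4 * B * r ≤ α := by
    have := min_le_right r₀ (α / (4 * B))
    rwa [le_div_iff₀ (by positivity), mul_comm] at this
  set c := (B + Λ + 1) / α
  have hc : 0 ≤ c := by positivity
  set K := 2 * (|m| / r + c * r) + 1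
  have hmr : |m| / r * r = |m| := div_mul_cancel₀ _ hr.ne'
  have hK : 2 * (c * r) + 1 ≤ K := by
    have : 0 ≤ |m| / r := by positivity
    linarith
  set θ := (B * (1 + K) + Λ + 1) / α
  have hθα : θ * α = B * (1 + K) + Λ + 1 := div_mul_cancel₀ _ hα.ne'
  have hcα : c * α = B + Λ + 1 := div_mul_cancel₀ _ hα.ne'
  have hK0 : 0 ≤ K := by linarith [mul_nonneg hc hr.le]
  have hθ : 0 ≤ θ := by positivity
  have hθr : θ * r ≤ c * r + K / 4 := by
    refine le_of_mul_le_mul_right ?_ hα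
    have := mul_le_mul_of_nonneg_left hrB hK0
    nlinarith
  refine ⟨r, K, θ, hr, min_le_left _ _, hθ, by linarith, ?_, ?_⟩
  · have : r * (3 * K / 4 - c * r) ≤ K * r - θ * r ^ 2 := by nlinarith
    nlinarith [le_abs_self m]
  · nlinarith [mul_le_mul_of_nonneg_left hrB hθ]

theorem IsSubsol.exists_eventually_le_of_pos (hu : IsSubsol D u) (hH : Ham D C i)
    (ha : 0 < D.a i 0) : ∃ L, ∀ᶠ t in 𝓝[>] (0:ℝ), u i t ≤ u i 0 + L * t := by
  have hℓ := D.ℓ_pos i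
  obtain ⟨B, hB, hHB⟩ := hH.exists_lower_bound
  obtain ⟨α, hα, η, hη, haα⟩ := exists_lt_a_of_pos ha
  obtain ⟨x, -, hmax⟩ := (hu.1 i).exists_isMaxOn ⟨0, left_mem_Icc.2 hℓ.le⟩ isCompact_Icc
  obtain ⟨r, K, θ, hr, hrη, hθ, hθr, hend, hG⟩ := exists_elliptic_constants (m := u i x - u i 0)
    hα hB (mul_nonneg D.lam_pos.le (abs_nonneg (u i 0))) (lt_min hη hℓ)
  have hrℓ : r ≤ D.ℓ i := hrη.trans (min_le_right _ _)
  have hbound := hu.sub_le_of_forall_G_pos (contDiff_quad K (-θ)) (quad_zero K (-θ)) hrℓ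
    (by have : u i r ≤ u i x := hmax ⟨hr.le, hrℓ⟩; simp only [quad]; linarith)
    fun t ht hle => by
      have htℓ : t ∈ Icc 0 (D.ℓ i) := ⟨ht.1.le, ht.2.le.trans hrℓ⟩
      have hθt : θ * t ≤ K := (mul_le_mul_of_nonneg_left ht.2.le hθ).trans hθr
      have hut : u i 0 ≤ u i t := by
        simp only [quad] at hle
        nlinarith [mul_le_mul_of_nonneg_left hθt ht.1.le]
      have hat : α < D.a i t := haα t htℓ (ht.2.trans_le (hrη.trans (min_le_left _ _)))
      have hp : |K + 2 * -θ * t| ≤ K + 2 * θ * r := by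
        rw [abs_le]
        constructor <;> nlinarith [mul_le_mul_of_nonneg_left ht.2.le hθ, mul_nonneg hθ ht.1.le]
      have hHt := hHB t htℓ (K + 2 * -θ * t)
      simp only [G, deriv_quad, deriv_deriv_quad]
      nlinarith [mul_le_mul_of_nonneg_left hp hB.le, mul_le_mul_of_nonneg_left hat.le hθ,
        mul_le_mul_of_nonneg_left hut D.lam_pos.le,
        mul_le_mul_of_nonneg_left (neg_abs_le (u i 0)) D.lam_pos.le]
  refine ⟨K, ?_⟩
  filter_upwards [Ioo_mem_nhdsGT hr] with t ht
  have := hbound t (Ioo_subset_Icc_self ht)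
  simp only [quad] at this
  nlinarith [mul_nonneg hθ (sq_nonneg t)]

theorem IsSubsol.exists_eventually_le (hu : IsSubsol D u) (hC : 0 < C) (hH : Ham D C i)
    (hco : D.a i 0 = 0 → Coercive D C i (Icc 0 (D.ℓ i))) :
    ∃ L, ∀ᶠ t in 𝓝[>] (0:ℝ), u i t ≤ u i 0 + L * t := by
  rcases (D.a_nonneg i 0 ⟨le_rfl, (D.ℓ_pos i).le⟩).eq_or_lt with ha | ha
  · exact hu.exists_eventually_le_of_coercive hC (hco ha.symm)
  · exact hu.exists_eventually_le_of_pos hH ha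

theorem exists_slope_G_pos_at_zero (hC : 0 < C) (hH : Ham D C i)
    (hco : D.a i 0 = 0 → Coercive D C i (Icc 0 (D.ℓ i))) (r L : ℝ) :
    ∃ M θ, L < M ∧ 0 ≤ θ ∧ 0 < G D i r M (2 * -θ) 0 := by
  have h0 : (0:ℝ) ∈ Icc 0 (D.ℓ i) := ⟨le_rfl, (D.ℓ_pos i).le⟩
  have hlr : -(D.lam * |r|) ≤ D.lam * r := by
    nlinarith [mul_le_mul_of_nonneg_left (neg_abs_le r) D.lam_pos.le]
  rcases (D.a_nonneg i 0 h0).eq_or_lt with ha | ha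
  · set M := max (L + 1) (C * (C + D.lam * |r| + 1))
    have hM : C * (C + D.lam * |r| + 1) ≤ M := le_max_right _ _
    have hM0 : 0 ≤ M := (mul_nonneg hC.le (by nlinarith [abs_nonneg r, D.lam_pos])).trans hM
    refine ⟨M, 0, by linarith [le_max_left (L + 1) (C * (C + D.lam * |r| + 1))], le_rfl, ?_⟩
    have hH0 := hco ha.symm 0 h0 M
    rw [abs_of_nonneg hM0] at hH0
    have hCM : C + D.lam * |r| + 1 ≤ C⁻¹ * M := by
      rw [le_inv_mul_iff₀ hC]; exact hM
    simp only [G, ← ha, zero_mul, sub_zero]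
    linarith
  · obtain ⟨B, hB, hHB⟩ := hH.exists_lower_bound
    set θ := (D.lam * |r| + B * (1 + |L + 1|) + 1) / (2 * D.a i 0)
    have hθa : θ * (2 * D.a i 0) = D.lam * |r| + B * (1 + |L + 1|) + 1 :=
      div_mul_cancel₀ _ (by positivity)
    have hθ : 0 ≤ θ :=
      div_nonneg (by nlinarith [abs_nonneg r, abs_nonneg (L + 1), D.lam_pos]) (by positivity)
    refine ⟨L + 1, θ, by linarith, hθ, ?_⟩
    have := hHB 0 h0 (L + 1)
    simp only [G]
    linarith

theorem eventually_exists_G_pos_near_zero (hC : 0 < C) (hH : Ham D C i)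
    (hco : D.a i 0 = 0 → Coercive D C i (Icc 0 (D.ℓ i))) (r : ℝ) :
    ∀ᶠ K in atTop, ∃ θ ≥ 0, ∃ η > 0, ∀ t ∈ Icc (0:ℝ) (D.ℓ i), t < η → 2 * θ * t ≤ 1 →
      0 < G D i r (-(K / 2) + 2 * -θ * t) (2 * -θ) t := by
  have h0 : (0:ℝ) ∈ Icc 0 (D.ℓ i) := ⟨le_rfl, (D.ℓ_pos i).le⟩
  have hlr : -(D.lam * |r|) ≤ D.lam * r := by
    nlinarith [mul_le_mul_of_nonneg_left (neg_abs_le r) D.lam_pos.le]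
  rcases (D.a_nonneg i 0 h0).eq_or_lt with ha | ha
  · filter_upwards [eventually_ge_atTop (2 * C * (C + D.lam * |r| + 1))] with K hK
    have hK0 : 0 ≤ K := (mul_nonneg (by linarith) (by nlinarith [abs_nonneg r, D.lam_pos])).trans hK
    refine ⟨0, le_rfl, 1, one_pos, fun t ht _ _ => ?_⟩
    have hHt := hco ha.symm t ht (-(K / 2))
    rw [abs_neg, abs_of_nonneg (by linarith)] at hHt
    have hCK : C + D.lam * |r| + 1 ≤ C⁻¹ * (K / 2) := by
      rw [le_inv_mul_iff₀ hC]; linarith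
    simp only [G, neg_zero, mul_zero, zero_mul, sub_zero, add_zero]
    linarith
  · obtain ⟨B, hB, hHB⟩ := hH.exists_lower_bound
    obtain ⟨α, hα, η, hη, haα⟩ := exists_lt_a_of_pos ha
    filter_upwards [eventually_ge_atTop 0] with K hK
    set θ := (D.lam * |r| + B * (2 + K) + 1) / (2 * α)
    have hθα : θ * (2 * α) = D.lam * |r| + B * (2 + K) + 1 := div_mul_cancel₀ _ (by positivity)
    have hθ : 0 ≤ θ := div_nonneg (by nlinarith [abs_nonneg r, D.lam_pos]) (by positivity)
    refine ⟨θ, hθ, η, hη, fun t ht htη hθt => ?_⟩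
    have hp : |-(K / 2) + 2 * -θ * t| ≤ 1 + K := by
      rw [abs_le]
      constructor <;> nlinarith [mul_nonneg hθ ht.1]
    have hHt := hHB t ht (-(K / 2) + 2 * -θ * t)
    simp only [G]
    nlinarith [mul_le_mul_of_nonneg_left hp hB.le, mul_le_mul_of_nonneg_left (haα t ht htη).le hθ]

theorem IsSubsol.sub_quad_le_of_lt (hu : IsSubsol D u) {K θ η t : ℝ} (hK : 1 ≤ K)
    (hθ : 0 ≤ θ)
    (hGi : ∀ s ∈ Icc (0:ℝ) (D.ℓ i), s < η → 2 * θ * s ≤ 1 →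
      0 < G D i (u i 0 - 1) (-(K / 2) + 2 * -θ * s) (2 * -θ) s)
    (ht : 0 ≤ t) (htℓ : t ≤ D.ℓ i) (htη : t ≤ η) (hKt : K * t ≤ 1) (hθt : 2 * θ * t ≤ 1)
    (hlt : u i t < u i 0 - K * t) :
    ∀ s ∈ Icc 0 t, u i s - quad (-(K / 2)) (-θ) s ≤ u i 0 := by
  refine hu.sub_le_of_forall_G_pos (contDiff_quad _ _) (quad_zero _ _) htℓ ?_ fun s hs hle => ?_
  · simp only [quad]
    nlinarith [mul_le_mul_of_nonneg_left hθt ht]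
  · have hs1 : 2 * θ * s ≤ 1 := (mul_le_mul_of_nonneg_left hs.2.le (by positivity)).trans hθt
    have hsu : u i 0 - 1 ≤ u i s := by
      simp only [quad] at hle
      nlinarith [mul_le_mul_of_nonneg_left hs1 hs.1.le, hs.1, hs.2]
    simp only [deriv_quad, deriv_deriv_quad]
    exact (hGi s ⟨hs.1.le, hs.2.le.trans htℓ⟩ (hs.2.trans_le htη) hs1).trans_le
      (G_mono D i hsu _ _ _)

theorem IsSubsol.exists_eventually_ge (hu : IsSubsol D u) (hC : 0 < C) (hH : ∀ j, Ham D C j)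
    (hco : ∀ j, D.a j 0 = 0 → Coercive D C j (Icc 0 (D.ℓ j))) (hF : Kirchhoff D)
    {L : Fin N → ℝ} (hL : ∀ j, ∀ᶠ t in 𝓝[>] (0:ℝ), u j t ≤ u j 0 + L j * t) :
    ∃ K, ∀ᶠ t in 𝓝[>] (0:ℝ), u i 0 - K * t ≤ u i t := by
  have hglue : ∀ j, u j 0 = u i 0 := fun j => hu.2.1 j i
  choose M θv hLM hθv hGv using fun j =>
    exists_slope_G_pos_at_zero hC (hH j) (hco j) (u i 0) (L j)
  have hFpos : ∀ᶠ K in atTop, 0 < D.F (u i 0) (Function.update M i (-(K / 2))) :=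
    ((hF.2.2 i (u i 0) M).comp (tendsto_neg_atTop_atBot.comp
      (tendsto_id.atTop_div_const two_pos))).eventually (eventually_gt_atTop 0)
  obtain ⟨K, hK, hFK, θ, hθ, η, hη, hGi⟩ := ((eventually_ge_atTop 1).and (hFpos.and
    (eventually_exists_G_pos_near_zero hC (hH i) (hco i) (u i 0 - 1)))).exists
  refine ⟨K, ?_⟩
  filter_upwards [Ioo_mem_nhdsGT (lt_min (D.ℓ_pos i) hη),
    eventually_mul_lt_nhdsGT (c := K) one_pos, eventually_mul_lt_nhdsGT (c := 2 * θ) one_pos]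
    with t ht hKt hθt
  by_contra! hlt
  have hmax_edge := hu.sub_quad_le_of_lt hK hθ hGi ht.1.le (ht.2.le.trans (min_le_left _ _))
    (ht.2.le.trans (min_le_right _ _)) hKt.le hθt.le hlt
  have hloc : ∀ j, ∀ᶠ s in 𝓝[>] (0:ℝ),
      u j s - quad (Function.update M i (-(K / 2)) j) (-Function.update θv i θ j) s ≤ u j 0 := by
    intro j
    rcases eq_or_ne j i with rfl | hji
    · filter_upwards [Ioo_mem_nhdsGT ht.1] with s hs
      simpa using hmax_edge s (Ioo_subset_Icc_self hs)
    · simp only [Function.update_of_ne hji]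
      filter_upwards [hL j, eventually_mul_le_quad (hLM j) (θv j)] with s h1 h2
      linarith
  rcases hu.junction_ineq_quad _ _ hloc with ⟨j, hj⟩ | hFle
  · rcases eq_or_ne j i with rfl | hji
    · have := hGi 0 ⟨le_rfl, (D.ℓ_pos j).le⟩ hη (by simp)
      simp only [Function.update_self, mul_zero, add_zero] at hj this
      linarith [G_mono D j (sub_le_self (u j 0) zero_le_one) (-(K / 2)) (2 * -θ) 0]
    · simp only [Function.update_of_ne hji, hglue] at hj
      exact (hGv j).not_ge hj
  · linarith [hglue i ▸ hFle i]

end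

theorem key_lemma_subsolution_general (N : ℕ) (D : Data N) (C : ℝ)
    (hSteady : Steady D C)
    (u : Fin N → ℝ → ℝ) (hu : IsSubsol D u) :
    ∀ i, ∃ plow pbar : ℝ,
      diffQuotLiminf (u i) = (plow : EReal) ∧
      diffQuotLimsup (u i) = (pbar : EReal) ∧
      D1plus (u i) = Set.Ici pbar := by
  obtain ⟨hC, hH, -, hco, hF⟩ := hSteady
  choose L hL using fun j => hu.exists_eventually_le hC (hH j) (hco j)
  intro i
  obtain ⟨K, hK⟩ := hu.exists_eventually_ge (i := i) hC hH hco hF hL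
  exact exists_diffQuot_eq_coe_of_eventually (hL i) hK

/-- Lemma 4.2 (i), key lemma, subsolution part.  Under the
steady assumptions, if `u − v` attains its maximum over `Γ` at `O`, then for
every edge `i` the quantities `p̲_i = liminf` and `p̄_i = limsup` of the
difference quotients of `u_i` at `0⁺` are finite, and `D⁺u_i(0) = [p̄_i, ∞)`. -/
theorem key_lemma_subsolution (N : ℕ) (D : Data N) (C : ℝ)
    (hSteady : Steady D C)
    (u v : Fin N → ℝ → ℝ) (hu : IsSubsol D u) (hv : IsSupersol D v)
    (hmax : ∀ i, ∀ t ∈ Set.Icc (0:ℝ) (D.ℓ i), u i t - v i t ≤ u i 0 - v i 0) :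
    ∀ i, ∃ plow pbar : ℝ,
      diffQuotLiminf (u i) = (plow : EReal) ∧
      diffQuotLimsup (u i) = (pbar : EReal) ∧
      D1plus (u i) = Set.Ici pbar :=
  key_lemma_subsolution_general N D C hSteady u hu

end Paper
end

section
/- Key lemma, degenerate branches: assume the steady assumptions and let u ∈ USC(Γ) be a viscosity subsolution and v ∈ LSC(Γ) a viscosity supersolution of problem (P) such that max_Γ (u − v) = (u − v)(O). Set p̲_i = liminf_{t→0⁺}(u_i(t)−u_i(0))/t, p̄_i = limsup_{t→0⁺}(u_i(t)−u_i(0))/t, q̲_i = liminf_{t→0⁺}(v_i(t)−v_i(0))/t and q̄_i = limsup_{t→0⁺}(v_i(t)−v_i(0))/t. Then for every i ∈ 𝒟 = {i : a_i(O) = 0}: (a) for every p ∈ [p̲_i, p̄_i], λ u(O) + H_i(O, p) ≤ 0; and (b) for every q ∈ (q̲_i, q̄_i), λ v(O) + H_i(O, q) ≥ 0. -/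
open Set Filter Topology

namespace Paper

variable {N : ℕ}

/-!
Since `a i 0 = 0` and `a i = σ i ^ 2` with `σ i` Lipschitz, `a i t = O(t²)` near `O`. Given a slope
`p` between the lower and upper Dini derivatives of `u i` at `0⁺`, pick `δ < ε` with
`u i δ < u i 0 + (p + ε) δ`; then `u i - φ` for `φ s = u i 0 + (p - ε) s + (2ε/δ) s²` is negative at
`δ`, positive somewhere in `(0, δ/4)`, and so has an interior maximum `τ < ε`. There the edge
subsolution inequality holds with second-order term `a i τ · 4ε/δ = O(ε²)` and slope within `3ε`
of `p`; letting `ε → 0`, the Lipschitz bounds of (Ham) give `λ u(O) + H_i(O, p) ≤ 0`. For `v` a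
linear test function of slope `q` suffices: as `q` lies strictly between the Dini derivatives,
`v i - φ` dips below `0` and then rises above it arbitrarily close to `O`.
-/

section Extremum

variable {α β : Type*} [LinearOrder α] [TopologicalSpace α] [CompactIccSpace α] [LinearOrder β]
  {f : α → β} {a b c : α}

theorem UpperSemicontinuousOn.exists_isMaxOn_Ioo (hf : UpperSemicontinuousOn f (Icc a b))
    (hc : c ∈ Icc a b) (ha : f a < f c) (hb : f b < f c) :
    ∃ τ ∈ Ioo a b, IsMaxOn f (Icc a b) τ := by
  obtain ⟨τ, hτ, hmax⟩ := hf.exists_isMaxOn ⟨c, hc⟩ isCompact_Icc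
  refine ⟨τ, ⟨hτ.1.lt_of_ne ?_, hτ.2.lt_of_ne ?_⟩, hmax⟩
  · rintro rfl
    exact (hmax hc).not_gt ha
  · rintro rfl
    exact (hmax hc).not_gt hb

theorem LowerSemicontinuousOn.exists_isMinOn_Ioo (hf : LowerSemicontinuousOn f (Icc a b))
    (hc : c ∈ Icc a b) (ha : f c < f a) (hb : f c < f b) :
    ∃ τ ∈ Ioo a b, IsMinOn f (Icc a b) τ :=
  UpperSemicontinuousOn.exists_isMaxOn_Ioo (β := βᵒᵈ) hf hc ha hb

end Extremum

theorem nonpos_of_forall_pos_le {x : ℝ} {f : ℝ → ℝ} (hf : ContinuousAt f 0) (hf0 : f 0 = 0)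
    (h : ∀ ε > 0, x ≤ f ε) : x ≤ 0 := by
  have hlim : Tendsto f (𝓝[>] 0) (𝓝 0) := by
    simpa only [hf0] using hf.tendsto.mono_left nhdsWithin_le_nhds
  exact ge_of_tendsto hlim (eventually_mem_nhdsWithin.mono h)

section DiffQuot

variable {w : ℝ → ℝ} {b r : ℝ}

theorem exists_lt_of_diffQuotLiminf_lt (h : diffQuotLiminf w < b) (hr : 0 < r) :
    ∃ t ∈ Ioo 0 r, w t < w 0 + b * t := by
  have hfreq : ∃ᶠ t in 𝓝[>] (0:ℝ), (w t - w 0) / t < b :=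
    (frequently_lt_of_liminf_lt (h := h)).mono fun t ht => by exact_mod_cast ht
  obtain ⟨t, ht, hmem⟩ := (hfreq.and_eventually (Ioo_mem_nhdsGT hr)).exists
  refine ⟨t, hmem, ?_⟩
  rw [div_lt_iff₀ hmem.1] at ht
  linarith

theorem exists_gt_of_lt_diffQuotLimsup (h : b < diffQuotLimsup w) (hr : 0 < r) :
    ∃ t ∈ Ioo 0 r, w 0 + b * t < w t := by
  have hfreq : ∃ᶠ t in 𝓝[>] (0:ℝ), b < (w t - w 0) / t :=
    (frequently_lt_of_lt_limsup (h := h)).mono fun t ht => by exact_mod_cast ht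
  obtain ⟨t, ht, hmem⟩ := (hfreq.and_eventually (Ioo_mem_nhdsGT hr)).exists
  refine ⟨t, hmem, ?_⟩
  rw [lt_div_iff₀ hmem.1] at ht
  linarith

end DiffQuot

theorem deriv_quadratic (c b K : ℝ) :
    deriv (fun s : ℝ => c + b * s + K * s ^ 2) = fun t => b + 2 * K * t := by
  ext t
  have hb : HasDerivAt (fun s : ℝ => b * s) b t := by simpa using (hasDerivAt_id t).const_mul b
  have hK : HasDerivAt (fun s : ℝ => K * s ^ 2) (K * (2 * t)) t := by
    simpa using (hasDerivAt_pow 2 t).const_mul K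
  exact ((hb.const_add c).add hK).deriv.trans (by ring)

theorem deriv_deriv_quadratic (c b K t : ℝ) :
    deriv (deriv (fun s : ℝ => c + b * s + K * s ^ 2)) t = 2 * K := by
  rw [deriv_quadratic]
  simp

theorem isTest_quadratic (c b K : ℝ) : IsTest (N := N) fun _ s => c + b * s + K * s ^ 2 :=
  ⟨fun _ _ => rfl, fun _ => by fun_prop⟩

section Viscosity

variable {D : Data N} {u v : Fin N → ℝ → ℝ} {i : Fin N} {δ τ c b K : ℝ}

theorem IsSubsol.G_nonpos_of_isMaxOn (hu : IsSubsol D u) (hδ : δ ≤ D.ℓ i) (hτ : τ ∈ Ioo 0 δ)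
    (hmax : IsMaxOn (fun s => u i s - (c + b * s + K * s ^ 2)) (Icc 0 δ) τ) :
    G D i (u i τ) (b + 2 * K * τ) (2 * K) τ ≤ 0 := by
  have hloc : LocalMaxEdge D (fun j s => u j s - (c + b * s + K * s ^ 2)) i τ :=
    ⟨δ - τ, sub_pos.2 hτ.2, fun s hs hsτ => hmax ⟨hs.1, by linarith [le_abs_self (s - τ)]⟩⟩
  have hG := (hu.2.2 _ (isTest_quadratic c b K)).1 i τ ⟨hτ.1, hτ.2.trans_le hδ⟩ hloc
  rwa [deriv_deriv_quadratic, deriv_quadratic] at hG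

theorem IsSupersol.G_nonneg_of_isMinOn (hv : IsSupersol D v) (hδ : δ ≤ D.ℓ i)
    (hτ : τ ∈ Ioo 0 δ) (hmin : IsMinOn (fun s => v i s - (c + b * s + K * s ^ 2)) (Icc 0 δ) τ) :
    0 ≤ G D i (v i τ) (b + 2 * K * τ) (2 * K) τ := by
  have hloc : LocalMinEdge D (fun j s => v j s - (c + b * s + K * s ^ 2)) i τ :=
    ⟨δ - τ, sub_pos.2 hτ.2, fun s hs hsτ => hmin ⟨hs.1, by linarith [le_abs_self (s - τ)]⟩⟩
  have hG := (hv.2.2 _ (isTest_quadratic c b K)).1 i τ ⟨hτ.1, hτ.2.trans_le hδ⟩ hloc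
  rwa [deriv_deriv_quadratic, deriv_quadratic] at hG

end Viscosity

theorem HypDiff.exists_le_mul_sq {D : Data N} {i : Fin N} (h : HypDiff D i) (h0 : D.a i 0 = 0) :
    ∃ L ≥ 0, ∀ t ∈ Icc 0 (D.ℓ i), D.a i t ≤ L * t ^ 2 := by
  obtain ⟨σ, ⟨L, hL⟩, hσ⟩ := h
  have h0mem : (0:ℝ) ∈ Icc 0 (D.ℓ i) := ⟨le_rfl, (D.ℓ_pos i).le⟩
  have hσ0 : σ 0 = 0 := by simpa [h0] using (hσ 0 h0mem).symm
  refine ⟨(L : ℝ) ^ 2, by positivity, fun t ht => ?_⟩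
  have hdist := hL.dist_le_mul t ht 0 h0mem
  rw [Real.dist_eq, Real.dist_eq, hσ0, sub_zero, sub_zero] at hdist
  calc D.a i t = |σ t| ^ 2 := by rw [hσ t ht, sq_abs]
    _ ≤ (L * |t|) ^ 2 := by gcongr
    _ = L ^ 2 * t ^ 2 := by rw [mul_pow, sq_abs]

theorem Ham.nonneg {D : Data N} {C : ℝ} {i : Fin N} (h : Ham D C i) : 0 ≤ C := by
  simpa using (abs_nonneg _).trans (h.2 0 ⟨le_rfl, (D.ℓ_pos i).le⟩ 1 0)

theorem Ham.abs_H_sub_le {D : Data N} {C : ℝ} {i : Fin N} (h : Ham D C i) {t : ℝ}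
    (ht : t ∈ Icc 0 (D.ℓ i)) (q p : ℝ) :
    |D.H i t q - D.H i 0 p| ≤ C * (1 + |q|) * t + C * |q - p| := by
  have h0mem : (0:ℝ) ∈ Icc 0 (D.ℓ i) := ⟨le_rfl, (D.ℓ_pos i).le⟩
  have hx := h.1 t ht 0 h0mem q
  rw [sub_zero, abs_of_nonneg ht.1] at hx
  calc |D.H i t q - D.H i 0 p|
      ≤ |D.H i t q - D.H i 0 q| + |D.H i 0 q - D.H i 0 p| := abs_sub_le _ _ _
    _ ≤ C * (1 + |q|) * t + C * |q - p| := add_le_add hx (h.2 0 h0mem q p)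

section NearOrigin

variable {D : Data N} {u v : Fin N → ℝ → ℝ} {i : Fin N}

theorem IsSubsol.exists_edge_ineq_near_origin (hu : IsSubsol D u) {L p ε : ℝ} (hL : 0 ≤ L)
    (ha : ∀ t ∈ Icc 0 (D.ℓ i), D.a i t ≤ L * t ^ 2) (hp₁ : diffQuotLiminf (u i) ≤ p)
    (hp₂ : p ≤ diffQuotLimsup (u i)) (hε : 0 < ε) :
    ∃ τ ∈ Icc 0 (D.ℓ i), τ ≤ ε ∧ ∃ q, |q - p| ≤ 3 * ε ∧ u i 0 - (|p| + ε) * ε ≤ u i τ ∧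
      D.lam * u i τ + D.H i τ q ≤ 4 * L * ε ^ 2 := by
  obtain ⟨δ, ⟨hδ0, hδ⟩, hδu⟩ := exists_lt_of_diffQuotLiminf_lt (b := p + ε)
    (hp₁.trans_lt (EReal.coe_lt_coe_iff.2 (lt_add_of_pos_right p hε))) (lt_min hε (D.ℓ_pos i))
  have hδε : δ < ε := hδ.trans_le (min_le_left _ _)
  have hδℓ : δ ≤ D.ℓ i := hδ.le.trans (min_le_right _ _)
  obtain ⟨s₀, ⟨hs₀0, hs₀⟩, hs₀u⟩ := exists_gt_of_lt_diffQuotLimsup (b := p - ε / 2)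
    ((EReal.coe_lt_coe_iff.2 (sub_lt_self p (half_pos hε))).trans_le hp₂)
    (by positivity : 0 < δ / 4)
  set K := 2 * ε / δ
  have hK : 0 < K := by positivity
  have hKδ : K * δ = 2 * ε := div_mul_cancel₀ _ hδ0.ne'
  -- The choice of `K` makes `f` negative at `δ` but keeps it positive at `s₀ < δ / 4`.
  set f := fun s => u i s - (u i 0 + (p - ε) * s + K * s ^ 2)
  have hf0 : f 0 = 0 := by simp [f]
  have hfδ : f δ < 0 := by simp only [f]; nlinarith
  have hfs₀ : 0 < f s₀ := by
    have hKs₀ : K * s₀ ≤ ε / 2 := by nlinarith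
    simp only [f]; nlinarith
  have hfusc : UpperSemicontinuousOn f (Icc 0 δ) := by
    have hφ : Continuous fun s : ℝ => -(u i 0 + (p - ε) * s + K * s ^ 2) := by fun_prop
    exact ((hu.1 i).mono (Icc_subset_Icc le_rfl hδℓ)).add hφ.continuousOn.upperSemicontinuousOn
  obtain ⟨τ, hτ, hmax⟩ := UpperSemicontinuousOn.exists_isMaxOn_Ioo hfusc
    ⟨hs₀0.le, by linarith⟩ (by rwa [hf0]) (hfδ.trans hfs₀)
  have hG := hu.G_nonpos_of_isMaxOn hδℓ hτ hmax
  have hfτ : 0 < f τ := hfs₀.trans_le (hmax ⟨hs₀0.le, by linarith⟩)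
  have hKτ : K * τ ≤ 2 * ε := hKδ ▸ mul_le_mul_of_nonneg_left hτ.2.le hK.le
  have hτε : τ ≤ ε := by linarith [hτ.2]
  have hτℓ : τ ∈ Icc 0 (D.ℓ i) := ⟨hτ.1.le, hτ.2.le.trans hδℓ⟩
  have haτ : D.a i τ * (2 * K) ≤ 4 * L * ε ^ 2 :=
    calc D.a i τ * (2 * K) ≤ L * τ ^ 2 * (2 * K) := by gcongr; exact ha τ hτℓ
      _ = 2 * L * τ * (K * τ) := by ring
      _ ≤ 2 * L * ε * (2 * ε) := by have := hτ.1; gcongr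
      _ = 4 * L * ε ^ 2 := by ring
  refine ⟨τ, hτℓ, hτε, p - ε + 2 * K * τ, ?_, ?_, ?_⟩
  · rw [abs_le]
    constructor <;> nlinarith [hτ.1]
  · have hlin : -(|p| + ε) * ε ≤ (p - ε) * τ := by
      nlinarith [mul_nonneg (by linarith [neg_abs_le p] : 0 ≤ p + |p|) hτ.1.le,
        mul_nonneg (by positivity : 0 ≤ |p| + ε) (sub_nonneg.2 hτε)]
    simp only [f] at hfτ
    nlinarith [hτ.1]
  · simp only [G] at hG
    linarith

theorem IsSupersol.exists_edge_ineq_near_origin (hv : IsSupersol D v) {q η : ℝ}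
    (hq₁ : diffQuotLiminf (v i) < q) (hq₂ : q < diffQuotLimsup (v i)) (hη : 0 < η) :
    ∃ τ ∈ Icc 0 (D.ℓ i), τ ≤ η ∧ v i τ ≤ v i 0 + q * τ ∧ 0 ≤ D.lam * v i τ + D.H i τ q := by
  obtain ⟨r, ⟨hr0, hr⟩, hrv⟩ := exists_gt_of_lt_diffQuotLimsup hq₂ (lt_min hη (D.ℓ_pos i))
  have hrℓ : r ≤ D.ℓ i := hr.le.trans (min_le_right _ _)
  obtain ⟨s₀, ⟨hs₀0, hs₀⟩, hs₀v⟩ := exists_lt_of_diffQuotLiminf_lt hq₁ hr0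
  set f := fun s => v i s - (v i 0 + q * s + 0 * s ^ 2)
  have hf0 : f 0 = 0 := by simp [f]
  have hfr : 0 < f r := by simp only [f]; linarith
  have hfs₀ : f s₀ < 0 := by simp only [f]; linarith
  have hflsc : LowerSemicontinuousOn f (Icc 0 r) := by
    have hφ : Continuous fun s : ℝ => -(v i 0 + q * s + 0 * s ^ 2) := by fun_prop
    exact ((hv.1 i).mono (Icc_subset_Icc le_rfl hrℓ)).add hφ.continuousOn.lowerSemicontinuousOn
  obtain ⟨τ, hτ, hmin⟩ := LowerSemicontinuousOn.exists_isMinOn_Ioo hflsc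
    ⟨hs₀0.le, hs₀.le⟩ (by rwa [hf0]) (hfs₀.trans hfr)
  have hG := hv.G_nonneg_of_isMinOn hrℓ hτ hmin
  have hfτ : f τ < 0 := (hmin ⟨hs₀0.le, hs₀.le⟩).trans_lt hfs₀
  simp only [f] at hfτ
  refine ⟨τ, ⟨hτ.1.le, hτ.2.le.trans hrℓ⟩, by linarith [hτ.2, min_le_left η (D.ℓ i)],
    by linarith, ?_⟩
  simpa [G] using hG

end NearOrigin

section Degenerate

variable {D : Data N} {C : ℝ} {u v : Fin N → ℝ → ℝ} {i : Fin N}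

theorem IsSubsol.lam_mul_add_H_nonpos (hu : IsSubsol D u) (hH : Ham D C i) (hσ : HypDiff D i)
    (ha : D.a i 0 = 0) {p : ℝ} (hp₁ : diffQuotLiminf (u i) ≤ p)
    (hp₂ : p ≤ diffQuotLimsup (u i)) : D.lam * u i 0 + D.H i 0 p ≤ 0 := by
  obtain ⟨L, hL, haL⟩ := hσ.exists_le_mul_sq ha
  have hC := hH.nonneg
  refine nonpos_of_forall_pos_le (f := fun ε => D.lam * (|p| + ε) * ε + 4 * L * ε ^ 2 +
    C * (1 + (|p| + 3 * ε)) * ε + C * (3 * ε)) (by fun_prop) (by simp) fun ε hε => ?_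
  obtain ⟨τ, hτ, hτε, q, hqp, huτ, hG⟩ := hu.exists_edge_ineq_near_origin hL haL hp₁ hp₂ hε
  have hH0 := (abs_le.1 (hH.abs_H_sub_le hτ q p)).1
  have hq : |q| ≤ |p| + 3 * ε := by linarith [abs_sub_abs_le_abs_sub q p]
  have hHτ : C * (1 + |q|) * τ ≤ C * (1 + (|p| + 3 * ε)) * ε := by have := hτ.1; gcongr
  have hHq : C * |q - p| ≤ C * (3 * ε) := by gcongr
  have huτ' : D.lam * (u i 0 - (|p| + ε) * ε) ≤ D.lam * u i τ :=
    mul_le_mul_of_nonneg_left huτ D.lam_pos.le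
  linarith

theorem IsSupersol.lam_mul_add_H_nonneg (hv : IsSupersol D v) (hH : Ham D C i) {q : ℝ}
    (hq₁ : diffQuotLiminf (v i) < q) (hq₂ : q < diffQuotLimsup (v i)) :
    0 ≤ D.lam * v i 0 + D.H i 0 q := by
  have hC := hH.nonneg
  suffices h : -(D.lam * v i 0 + D.H i 0 q) ≤ 0 by linarith
  refine nonpos_of_forall_pos_le (f := fun η => D.lam * |q| * η + C * (1 + |q|) * η)
    (by fun_prop) (by simp) fun η hη => ?_
  obtain ⟨τ, hτ, hτη, hvτ, hG⟩ := hv.exists_edge_ineq_near_origin hq₁ hq₂ hη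
  have hH0 := (abs_le.1 (hH.abs_H_sub_le hτ q q)).2
  have hHτ : C * (1 + |q|) * τ ≤ C * (1 + |q|) * η := by gcongr
  have hqτ : q * τ ≤ |q| * η := (mul_le_mul_of_nonneg_right (le_abs_self q) hτ.1).trans
    (mul_le_mul_of_nonneg_left hτη (abs_nonneg q))
  have hvτ' : D.lam * v i τ ≤ D.lam * (v i 0 + |q| * η) :=
    mul_le_mul_of_nonneg_left (by linarith) D.lam_pos.le
  simp only [sub_self, abs_zero, mul_zero, add_zero] at hH0
  linarith

end Degenerate

theorem key_lemma_degenerate_general (N : ℕ) (D : Data N) (C : ℝ)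
    (hSteady : Steady D C)
    (u v : Fin N → ℝ → ℝ) (hu : IsSubsol D u) (hv : IsSupersol D v) :
    ∀ i, D.a i 0 = 0 →
      (∀ p : ℝ, diffQuotLiminf (u i) ≤ (p : EReal) →
        (p : EReal) ≤ diffQuotLimsup (u i) →
        D.lam * u i 0 + D.H i 0 p ≤ 0) ∧
      (∀ q : ℝ, diffQuotLiminf (v i) < (q : EReal) →
        (q : EReal) < diffQuotLimsup (v i) →
        0 ≤ D.lam * v i 0 + D.H i 0 q) := by
  obtain ⟨-, hHam, hσ, -, -⟩ := hSteady
  exact fun i ha => ⟨fun p => hu.lam_mul_add_H_nonpos (hHam i) (hσ i) ha,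
    fun q => hv.lam_mul_add_H_nonneg (hHam i)⟩

/-- Lemma 4.2 (iii), key lemma, degenerate branches.  Under
the steady assumptions, if `u − v` attains its maximum over `Γ` at `O`, then
for every `i ∈ 𝒟` (i.e. `a_i(O) = 0`): for all `p ∈ [p̲_i, p̄_i]`,
`λ u(O) + H_i(O,p) ≤ 0`, and for all `q ∈ (q̲_i, q̄_i)`,
`λ v(O) + H_i(O,q) ≥ 0`. -/
theorem key_lemma_degenerate (N : ℕ) (D : Data N) (C : ℝ)
    (hSteady : Steady D C)
    (u v : Fin N → ℝ → ℝ) (hu : IsSubsol D u) (hv : IsSupersol D v)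
    (hmax : ∀ i, ∀ t ∈ Set.Icc (0:ℝ) (D.ℓ i), u i t - v i t ≤ u i 0 - v i 0) :
    ∀ i, D.a i 0 = 0 →
      (∀ p : ℝ, diffQuotLiminf (u i) ≤ (p : EReal) →
        (p : EReal) ≤ diffQuotLimsup (u i) →
        D.lam * u i 0 + D.H i 0 p ≤ 0) ∧
      (∀ q : ℝ, diffQuotLiminf (v i) < (q : EReal) →
        (q : EReal) < diffQuotLimsup (v i) →
        0 ≤ D.lam * v i 0 + D.H i 0 q) :=
  key_lemma_degenerate_general N D C hSteady u v hu hv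

end Paper
end
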